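/- arXiv:2001.04334 — 4 statements merged into one kernel-verified Lean document; each statement's English description precedes it below -/
import Mathlib

section
/- Let d ≥ 2 and k ≥ 2 be integers, λ_k = k(k+d−2), and α_{k−1} = (2k + d − 4)(k + d − 2)/(k + d − 3). Then λ_k/α_{k−1}² = k(k+d−2)(k+d−3)² / ((2k+d−4)²(k+d−2)²), and this quantity is at most 1/4 when d = 2 or d ≥ 6, and at most 1/3 when d ∈ {3,4,5}. -/
/-- λ_k = k(k+d-2). -/
noncomputable def lamVal (d k : ℕ) : ℝ := (k : ℝ) * ((k : ℝ) + (d : ℝ) - 2)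

/-- α_{k−1} = (2k + d − 4)(k + d − 2)/(k + d − 3) (the Pestov weight
`α_l = (2l+d−2)(l+d−1)/(l+d−2)` at `l = k−1`). -/
noncomputable def alphaPrev (d k : ℕ) : ℝ :=
  (2 * (k : ℝ) + (d : ℝ) - 4) * ((k : ℝ) + (d : ℝ) - 2) / ((k : ℝ) + (d : ℝ) - 3)

/-- for integers `d ≥ 2`, `k ≥ 2`, with `λ_k = k(k+d−2)` and
`α_{k−1} = (2k+d−4)(k+d−2)/(k+d−3)`, one has
`λ_k/α_{k−1}² = k(k+d−2)(k+d−3)²/((2k+d−4)²(k+d−2)²)`, and this quantity is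
at most `1/4` when `d = 2` or `d ≥ 6`, and at most `1/3` when `d ∈ {3,4,5}`. -/
theorem lam_over_alpha_sq_bound (d k : ℕ) (hd : 2 ≤ d) (hk : 2 ≤ k) :
    lamVal d k / (alphaPrev d k) ^ 2 =
      (k : ℝ) * ((k : ℝ) + (d : ℝ) - 2) * ((k : ℝ) + (d : ℝ) - 3) ^ 2 /
        ((2 * (k : ℝ) + (d : ℝ) - 4) ^ 2 * ((k : ℝ) + (d : ℝ) - 2) ^ 2) ∧
    ((d = 2 ∨ 6 ≤ d) → lamVal d k / (alphaPrev d k) ^ 2 ≤ 1 / 4) ∧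
    ((d = 3 ∨ d = 4 ∨ d = 5) → lamVal d k / (alphaPrev d k) ^ 2 ≤ 1 / 3) := by

  have hK : (2:ℝ) ≤ (k:ℝ) := by exact_mod_cast hk
  have hD : (2:ℝ) ≤ (d:ℝ) := by exact_mod_cast hd
  have h1 : (0:ℝ) < (k:ℝ) + (d:ℝ) - 3 := by linarith
  have h2 : (0:ℝ) < 2*(k:ℝ) + (d:ℝ) - 4 := by linarith
  have h3 : (0:ℝ) < (k:ℝ) + (d:ℝ) - 2 := by linarith
  have heq : lamVal d k / (alphaPrev d k) ^ 2 =
      (k : ℝ) * ((k : ℝ) + (d : ℝ) - 2) * ((k : ℝ) + (d : ℝ) - 3) ^ 2 /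
        ((2 * (k : ℝ) + (d : ℝ) - 4) ^ 2 * ((k : ℝ) + (d : ℝ) - 2) ^ 2) := by
    unfold lamVal alphaPrev
    rw [div_pow]
    rw [div_div_eq_mul_div]
    congr 1
    ring
  refine ⟨heq, ?_, ?_⟩
  · rintro (rfl | hd6)
    · rw [heq]
      rw [div_le_div_iff₀ (by positivity) (by norm_num)]
      push_cast
      nlinarith [sq_nonneg ((k:ℝ) - 1)]
    · have hD6 : (6:ℝ) ≤ (d:ℝ) := by exact_mod_cast hd6
      rw [heq, div_le_div_iff₀ (by positivity) (by norm_num)]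
      have hm : (0:ℝ) ≤ (k:ℝ) - 2 := by linarith
      have he : (0:ℝ) ≤ (d:ℝ) - 6 := by linarith
      nlinarith [mul_nonneg hm he, mul_nonneg (mul_nonneg hm he) he,
        mul_nonneg (mul_nonneg he he) he, mul_nonneg he he, sq_nonneg ((k:ℝ)+(d:ℝ)-2)]
  · have hm : (0:ℝ) ≤ (k:ℝ) - 2 := by linarith
    rintro (rfl | rfl | rfl) <;> rw [heq] <;>
      rw [div_le_div_iff₀ (by positivity) (by norm_num)] <;> push_cast <;>
      nlinarith [mul_nonneg hm hm, mul_nonneg (mul_nonneg hm hm) hm]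
end

section
/- Let d ≥ 2, m ≥ 1 and l ≥ 0 be integers (excluding the single case handled separately), and set λ_k = k(k+d−2), α_k = (2k+d−2)(k+d−1)/(k+d−2) for k ≥ 1, α_0 = d−1, and c_d = 2 if d = 2, c_d = 1.28 if d = 3, c_d = 1 if d ≥ 4. If b satisfies |b| ≤ c_d / α_{m−1+l} with m + l ≥ 2, then λ_{m+l} b² ≤ 1. Moreover, for m = 1, l = 0 one has λ_1/α_0² = 1/(d−1) ≤ 1. -/
/-- The Pestov weight sequence: `α_0 = d−1` and
`α_k = (2k+d−2)(k+d−1)/(k+d−2)` for `k ≥ 1`. -/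
noncomputable def alphaS (d k : ℕ) : ℝ :=
  if k = 0 then (d : ℝ) - 1
  else (2 * (k : ℝ) + (d : ℝ) - 2) * ((k : ℝ) + (d : ℝ) - 1) / ((k : ℝ) + (d : ℝ) - 2)

/-- The constant `c_d`: `c_2 = 2`, `c_3 = 1.28`, `c_d = 1` for `d ≥ 4`. -/
noncomputable def cConst (d : ℕ) : ℝ :=
  if d = 2 then 2 else if d = 3 then 1.28 else 1

/-- if `d ≥ 2`, `m ≥ 1`, `l ≥ 0` with `m + l ≥ 2`, and
`|b| ≤ c_d / α_{m−1+l}`, then `λ_{m+l} b² ≤ 1`.  Moreover in the remaining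
case `m = 1`, `l = 0` one has `λ_1/α_0² = 1/(d−1) ≤ 1`. -/
theorem coefficient_bound (d m l : ℕ) (hd : 2 ≤ d) (hm : 1 ≤ m) (hml : 2 ≤ m + l)
    (b : ℝ) (hb : |b| ≤ cConst d / alphaS d (m - 1 + l)) :
    lamVal d (m + l) * b ^ 2 ≤ 1 ∧
    (lamVal d 1 / (alphaS d 0) ^ 2 = 1 / ((d : ℝ) - 1) ∧
      lamVal d 1 / (alphaS d 0) ^ 2 ≤ 1) := by
  have hD : (2:ℝ) ≤ (d:ℝ) := by exact_mod_cast hd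
  constructor
  · have hK : (2:ℝ) ≤ ((m+l : ℕ):ℝ) := by exact_mod_cast hml
    set K : ℝ := ((m+l : ℕ):ℝ) with hKdef
    set D : ℝ := (d:ℝ) with hDdef
    clear_value K D
    have hk1 : m - 1 + l = m + l - 1 := by omega
    have hcast : ((m + l - 1 : ℕ) : ℝ) = K - 1 := by
      have h1 : 1 ≤ m + l := by omega
      rw [hKdef]; push_cast [h1]; ring
    have hα : alphaS d (m-1+l) = (2*K+D-4)*(K+D-2)/(K+D-3) := by
      rw [hk1, alphaS, if_neg (by omega : ¬ (m + l - 1 = 0)), hcast, ← hDdef]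
      ring_nf
    have hden : (0:ℝ) < K+D-3 := by linarith
    have hnum : (0:ℝ) < (2*K+D-4)*(K+D-2) := by nlinarith
    have hαpos : 0 < alphaS d (m-1+l) := by rw [hα]; exact div_pos hnum hden
    have hc : 0 < cConst d := by
      unfold cConst; split <;> [norm_num; skip]; split <;> norm_num
    have hb2 : b^2 ≤ (cConst d / alphaS d (m-1+l))^2 := by
      rw [← sq_abs b]
      exact pow_le_pow_left₀ (abs_nonneg b) hb 2
    have key : cConst d ^ 2 * (K * (K+D-3)^2) ≤ (2*K+D-4)^2*(K+D-2) := by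
      rcases eq_or_ne d 2 with h2 | h2
      · have : D = 2 := by rw [hDdef, h2]; norm_num
        rw [cConst, if_pos h2, this]
        nlinarith [sq_nonneg (K-1)]
      · rcases eq_or_ne d 3 with h3 | h3
        · have : D = 3 := by rw [hDdef, h3]; norm_num
          rw [cConst, if_neg h2, if_pos h3, this]
          nlinarith [sq_nonneg (K-2), sq_nonneg K]
        · have hD4 : (4:ℝ) ≤ D := by
            have : 4 ≤ d := by omega
            rw [hDdef]; exact_mod_cast this
          rw [cConst, if_neg h2, if_neg h3]
          nlinarith [sq_nonneg (K-2), sq_nonneg (D-4), mul_nonneg (sub_nonneg.2 hK) (sub_nonneg.2 hD4)]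
    have hlam : lamVal d (m+l) = K*(K+D-2) := by
      rw [lamVal, ← hKdef, ← hDdef]
    have hlamnn : (0:ℝ) ≤ K*(K+D-2) := by nlinarith
    calc lamVal d (m+l) * b ^ 2 ≤ K*(K+D-2) * (cConst d / alphaS d (m-1+l))^2 := by
          rw [hlam]; exact mul_le_mul_of_nonneg_left hb2 hlamnn
      _ ≤ 1 := by
          rw [hα, div_pow, div_pow, div_div_eq_mul_div, ← mul_div_assoc,
            div_le_one (by positivity)]
          have h := mul_le_mul_of_nonneg_right key (by linarith : (0:ℝ) ≤ K+D-2)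
          calc K*(K+D-2)*(cConst d^2*(K+D-3)^2)
              = cConst d^2*(K*(K+D-3)^2)*(K+D-2) := by ring
            _ ≤ (2*K+D-4)^2*(K+D-2)*(K+D-2) := h
            _ = ((2*K+D-4)*(K+D-2))^2 := by ring
  · have hα0 : alphaS d 0 = (d:ℝ) - 1 := by rw [alphaS, if_pos rfl]
    have hlam1 : lamVal d 1 = (d:ℝ) - 1 := by unfold lamVal; push_cast; ring
    have hpos : (0:ℝ) < (d:ℝ) - 1 := by linarith
    constructor
    · rw [hα0, hlam1]; field_simp
    · rw [hα0, hlam1]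
      rw [div_le_one (by positivity)]
      nlinarith
end

section
/- On the boundary ∂SM of the unit sphere bundle of a compact Riemannian manifold with boundary, the tangential operator Tu = μ ∇̄_h u − ν Xu (where ∇̄_h u = ∇_h u + (Xu)v is the full horizontal gradient and μ(x,v) = ⟨v,ν(x)⟩) can be rewritten as Tu = μ ∇̄_h^∥ u − ν X^∥ u, where ∇̄_h^∥ u = ∇̄_h u − ⟨∇̄_h u, ν⟩ν is the tangential horizontal gradient and X^∥ = (v − ⟨v,ν⟩ν, 0). In particular T only involves derivatives of u along ∂SM, so T maps C^∞(∂SM) to sections of N over ∂SM. -/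
open scoped RealInnerProductSpace

/-- on `∂SM`, the tangential operator
`Tu = μ∇̄_h u − ν Xu = μ∇_h u − (Xu)(ν − μv)` (using `∇_v μ = ν − μv` and
`∇̄_h u = ∇_h u + (Xu)v`) can be rewritten as `Tu = μ∇̄_h^∥ u − ν X^∥ u`,
where `∇̄_h^∥u = ∇̄_h u − ⟨∇̄_h u, ν⟩ν` and `X^∥u = ⟨∇̄_h u, v − μν⟩`.
In particular `T` only involves derivatives along `∂SM`.

This is a pointwise identity in the fiber: `E` models the (horizontal copy of
the) tangent space `T_x M`, `v` the unit direction, `ν` the outward unit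
normal, `Gh = ∇_h u` (which is orthogonal to `v`) and `Xu` the derivative
along the geodesic vector field, so that `∇̄_h u = Gh + (Xu)v`. -/
theorem tangential_operator_rewrite
    {E : Type*} [NormedAddCommGroup E] [InnerProductSpace ℝ E]
    (v ν : E) (hv : ‖v‖ = 1) (hν : ‖ν‖ = 1)
    (Gh : E) (hGh : ⟪Gh, v⟫ = 0) (Xu : ℝ) :
    ⟪v, ν⟫ • Gh - Xu • (ν - ⟪v, ν⟫ • v) =
      ⟪v, ν⟫ • ((Gh + Xu • v) - ⟪Gh + Xu • v, ν⟫ • ν) -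
        ⟪Gh + Xu • v, v - ⟪v, ν⟫ • ν⟫ • ν := by
  have hvv : ⟪v, v⟫ = 1 := by
    rw [real_inner_self_eq_norm_sq, hv]; norm_num
  simp only [inner_add_left, inner_smul_left, inner_sub_right, inner_smul_right,
    hvv, hGh, RCLike.ofReal_real_eq_id, id_eq, starRingEnd_apply, star_trivial]
  module
end

section
/- Let (M,g) be a compact manifold with smooth boundary and non-positive sectional curvature. For u ∈ Ω_l with l ≥ 1, one has ‖X_− u‖² + (1/α_{l−1}) P(u,u) ≤ (β_{l+1}/α_{l−1}) ‖X_+ u‖², where β_{l+1}/α_{l−1} = D_d(l)² with D_d(l) ≤ 1 for d ≥ 4. -/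
open scoped RealInnerProductSpace

/-- α_k = λ_k[(1 + 1/(k+d−2))² − 1] + (d−1)
(equal to (2k+d−2)(k+d−1)/(k+d−2) for k ≥ 1). -/
noncomputable def alphaVal (d k : ℕ) : ℝ :=
  lamVal d k * ((1 + 1 / ((k : ℝ) + (d : ℝ) - 2)) ^ 2 - 1) + ((d : ℝ) - 1)

/-- β_k = λ_k[1 − (1 − 1/k)²] − (d−1). -/
noncomputable def betaVal (d k : ℕ) : ℝ :=
  lamVal d k * (1 - (1 - 1 / (k : ℝ)) ^ 2) - ((d : ℝ) - 1)

/-!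
Dividing the localized Pestov identity by `α_{l-1} > 0` and dropping the non-negative terms
`-(R∇_v u, ∇_v u)` and `‖Z u‖²` gives the inequality. For the constant, the closed forms
`α_k = 2k + k/(k+d-2) + d - 1` and `β_k = (k+d-2)(2 - 1/k) - (d-1)` give
`α_{l-1} - β_{l+1} = (d-2)(d-4) / ((l+1)(l+d-3))`, which is non-negative for `d ≥ 4`.
-/

lemma sub_one_le_alphaVal {d : ℕ} (hd : 2 ≤ d) (k : ℕ) : (d : ℝ) - 1 ≤ alphaVal d k := by
  have hs : (0 : ℝ) ≤ (k : ℝ) + d - 2 := by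
    have : (2 : ℝ) ≤ d := by exact_mod_cast hd
    linarith [k.cast_nonneg (α := ℝ)]
  have hlam : 0 ≤ lamVal d k := mul_nonneg k.cast_nonneg hs
  have hsq : 0 ≤ (1 + 1 / ((k : ℝ) + d - 2)) ^ 2 - 1 := by
    have : (1 : ℝ) ≤ 1 + 1 / ((k : ℝ) + d - 2) := le_add_of_nonneg_right (by positivity)
    nlinarith
  unfold alphaVal
  nlinarith [mul_nonneg hlam hsq]

lemma alphaVal_pos {d : ℕ} (hd : 2 ≤ d) (k : ℕ) : 0 < alphaVal d k := by
  have : (2 : ℝ) ≤ d := by exact_mod_cast hd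
  linarith [sub_one_le_alphaVal hd k]

lemma alphaVal_eq {d k : ℕ} (hs : (k : ℝ) + d - 2 ≠ 0) :
    alphaVal d k = 2 * k + k / ((k : ℝ) + d - 2) + (d - 1) := by
  unfold alphaVal lamVal
  field_simp
  ring

lemma betaVal_eq {d k : ℕ} (hk : k ≠ 0) :
    betaVal d k = ((k : ℝ) + d - 2) * (2 - 1 / k) - (d - 1) := by
  unfold betaVal lamVal
  field_simp
  ring

lemma alphaVal_sub_betaVal {d l : ℕ} (hl : 1 ≤ l) (hs : (l : ℝ) + d - 3 ≠ 0) :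
    alphaVal d (l - 1) - betaVal d (l + 1) =
      ((d : ℝ) - 2) * (d - 4) / (((l : ℝ) + 1) * (l + d - 3)) := by
  have hl1 : (l : ℝ) + 1 ≠ 0 := by positivity
  have hcast : ((l - 1 : ℕ) : ℝ) + d - 2 = l + d - 3 := by
    rw [Nat.cast_sub hl]
    ring
  rw [alphaVal_eq (hcast ▸ hs), betaVal_eq l.succ_ne_zero, hcast, Nat.cast_sub hl]
  push_cast
  field_simp
  ring

lemma betaVal_le_alphaVal {d l : ℕ} (hd : 4 ≤ d) (hl : 1 ≤ l) :
    betaVal d (l + 1) ≤ alphaVal d (l - 1) := by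
  have hd' : (4 : ℝ) ≤ d := by exact_mod_cast hd
  have hl' : (1 : ℝ) ≤ l := by exact_mod_cast hl
  have hs : (0 : ℝ) < l + d - 3 := by linarith
  rw [← sub_nonneg, alphaVal_sub_betaVal hl hs.ne']
  exact div_nonneg (mul_nonneg (by linarith) (by linarith)) (by positivity)

lemma add_inv_mul_le_div_mul_of_eq {a b X Y R Z P : ℝ} (ha : 0 < a) (hR : R ≤ 0)
    (hZ : 0 ≤ Z) (h : a * X - R + Z + P = b * Y) :
    X + a⁻¹ * P ≤ b / a * Y := by
  have hexpand : (X + a⁻¹ * P) * a = a * X + P := by field_simp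
  rw [div_mul_eq_mul_div, le_div_iff₀ ha, hexpand]
  linarith

theorem pestov_localized_inequality_general
    {H Z ZB : Type*}
    [NormedAddCommGroup H] [InnerProductSpace ℝ H]
    [NormedAddCommGroup Z] [InnerProductSpace ℝ Z]
    [NormedAddCommGroup ZB] [InnerProductSpace ℝ ZB]
    (d : ℕ) (hd : 2 ≤ d) (l : ℕ) (hl : 1 ≤ l)
    (Xp Xm : H →ₗ[ℝ] H)
    (gradV : H →ₗ[ℝ] Z) (curv : Z →ₗ[ℝ] Z) (Zop : H →ₗ[ℝ] Z)
    (Trest gradVrest : H →ₗ[ℝ] ZB)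
    (u : H)
    -- non-positive sectional curvature
    (hcurv : ⟪curv (gradV u), gradV u⟫ ≤ 0)
    -- the frequency-localized Pestov identity with boundary term on Ω_l
    (hPestov : alphaVal d (l - 1) * ‖Xm u‖ ^ 2 - ⟪curv (gradV u), gradV u⟫ +
        ‖Zop u‖ ^ 2 + ⟪Trest u, gradVrest u⟫ = betaVal d (l + 1) * ‖Xp u‖ ^ 2) :
    ‖Xm u‖ ^ 2 + (alphaVal d (l - 1))⁻¹ * ⟪Trest u, gradVrest u⟫ ≤
      (betaVal d (l + 1) / alphaVal d (l - 1)) * ‖Xp u‖ ^ 2 ∧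
    (4 ≤ d → betaVal d (l + 1) / alphaVal d (l - 1) ≤ 1) :=
  ⟨add_inv_mul_le_div_mul_of_eq (alphaVal_pos hd _) hcurv (sq_nonneg _) hPestov,
    fun hd4 => (div_le_one (alphaVal_pos hd _)).2 (betaVal_le_alphaVal hd4 hl)⟩

/-- for a compact `d`-manifold with smooth boundary and
non-positive sectional curvature, and `u ∈ Ω_l` with `l ≥ 1`,
`‖X_−u‖² + (1/α_{l−1}) P(u,u) ≤ (β_{l+1}/α_{l−1}) ‖X_+u‖²`,
where `β_{l+1}/α_{l−1} = D_d(l)²` satisfies `D_d(l) ≤ 1` for `d ≥ 4`.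

The setting is axiomatized as in the localized Pestov identity: `P(u,u)` is
the boundary term `(Tu, ∇_v u)_{∂SM}`; non-positive sectional curvature gives
`(R∇_v u, ∇_v u) ≤ 0`, and the localized Pestov identity on `Ω_l` is supplied
as a hypothesis. -/
theorem pestov_localized_inequality
    {H Z ZB : Type*}
    [NormedAddCommGroup H] [InnerProductSpace ℝ H]
    [NormedAddCommGroup Z] [InnerProductSpace ℝ Z]
    [NormedAddCommGroup ZB] [InnerProductSpace ℝ ZB]
    (d : ℕ) (hd : 2 ≤ d) (l : ℕ) (hl : 1 ≤ l)
    (proj : ℕ → H →ₗ[ℝ] H)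
    (Xp Xm : H →ₗ[ℝ] H)
    (gradV : H →ₗ[ℝ] Z) (curv : Z →ₗ[ℝ] Z) (Zop : H →ₗ[ℝ] Z)
    (Trest gradVrest : H →ₗ[ℝ] ZB)
    (u : H) (hu : proj l u = u)
    -- non-positive sectional curvature
    (hcurv : ⟪curv (gradV u), gradV u⟫ ≤ 0)
    -- the frequency-localized Pestov identity with boundary term on Ω_l
    (hPestov : alphaVal d (l - 1) * ‖Xm u‖ ^ 2 - ⟪curv (gradV u), gradV u⟫ +
        ‖Zop u‖ ^ 2 + ⟪Trest u, gradVrest u⟫ = betaVal d (l + 1) * ‖Xp u‖ ^ 2) :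
    ‖Xm u‖ ^ 2 + (alphaVal d (l - 1))⁻¹ * ⟪Trest u, gradVrest u⟫ ≤
      (betaVal d (l + 1) / alphaVal d (l - 1)) * ‖Xp u‖ ^ 2 ∧
    (4 ≤ d → betaVal d (l + 1) / alphaVal d (l - 1) ≤ 1) :=
  pestov_localized_inequality_general d hd l hl Xp Xm gradV curv Zop Trest gradVrest u hcurv hPestov
end
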